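/- arXiv:2002.08757 — 2 statements merged into one kernel-verified Lean document; each statement's English description precedes it below -/
import Mathlib

section
/- Under the simulation framework, and assuming that b(·,n) is continuous on Θ for each n and that there exist β > 0, M > 0 and N such that sup_{θ∈Θ} ‖b(θ, n)‖_∞ ≤ M n^{−β} for all n ≥ N, one has ‖E[θ̂_n] − θ₀‖_∞ ≤ 2 M n^{−β} for all n ≥ N. -/
/-!
Taking expectations in the fixed-point equation `θ̃_n = θ̂_n + b(θ̂_n, n) + H⁻¹ ∑ₕ v*_h(θ̂_n, n)`
kills all zero-mean terms and leaves `E[θ̂_n] - θ₀ = b(θ₀, n) - E[b(θ̂_n, n)]`. Both terms on the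
right are controlled coordinatewise by the uniform bound `M n^{-β}` on `Θ`, since `θ₀` and every
value of `θ̂_n` lie in `Θ`.
-/

open MeasureTheory

section

variable {Ω E : Type*} [MeasurableSpace Ω] {P : Measure Ω}
  [NormedAddCommGroup E] [NormedSpace ℝ E]

lemma integral_smul_sum_eq_zero {ι : Type*} [Fintype ι] (a : ℝ) {w : ι → Ω → E}
    (hw : ∀ h, Integrable (w h) P) (hw0 : ∀ h, ∫ ω, w h ω ∂P = 0) :
    ∫ ω, a • ∑ h, w h ω ∂P = 0 := by
  rw [integral_smul, integral_finsetSum _ fun h _ => hw h]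
  simp [hw0]

lemma integral_add_integral_eq_of_ae_eq [CompleteSpace E] [IsProbabilityMeasure P]
    {c : E} {v X Y w : Ω → E}
    (h : ∀ᵐ ω ∂P, c + v ω = X ω + Y ω + w ω)
    (hv : Integrable v P) (hv0 : ∫ ω, v ω ∂P = 0)
    (hX : Integrable X P) (hY : Integrable Y P) (hw : Integrable w P) (hw0 : ∫ ω, w ω ∂P = 0) :
    ∫ ω, X ω ∂P + ∫ ω, Y ω ∂P = c := by
  have := integral_congr_ae h
  rwa [integral_add (integrable_const c) hv,
    integral_add (f := fun ω => X ω + Y ω) (hX.add hY) hw,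
    integral_add hX hY, integral_const, probReal_univ, one_smul, hv0, hw0,
    add_zero, add_zero, eq_comm] at this

end

lemma abs_integral_apply_le {Ω ι : Type*} [MeasurableSpace Ω] {P : Measure Ω}
    [IsProbabilityMeasure P] [Fintype ι] {f : Ω → EuclideanSpace ℝ ι} (hf : Integrable f P)
    (i : ι) {C : ℝ} (hC : ∀ ω, |f ω i| ≤ C) :
    |(∫ ω, f ω ∂P) i| ≤ C := by
  have hcomm : (∫ ω, f ω ∂P) i = ∫ ω, f ω i ∂P := by
    simpa using ((EuclideanSpace.proj (𝕜 := ℝ) i).integral_comp_comm hf).symm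
  rw [hcomm, ← Real.norm_eq_abs]
  simpa using norm_integral_le_of_norm_le_const (μ := P)
    (.of_forall fun ω => (Real.norm_eq_abs _).trans_le (hC ω))

theorem stmt_4_general {p H : ℕ}
    {Ω : Type*} [MeasurableSpace Ω] (P : Measure Ω) [IsProbabilityMeasure P]
    (Θ : Set (EuclideanSpace ℝ (Fin p)))
    (θ₀ : EuclideanSpace ℝ (Fin p)) (hθ₀ : θ₀ ∈ interior Θ)
    -- bias function `b(·, n)`, continuous on `Θ` for each `n`
    (b : ℕ → EuclideanSpace ℝ (Fin p) → EuclideanSpace ℝ (Fin p))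
    -- zero-mean error of the initial estimator
    (v : ℕ → Ω → EuclideanSpace ℝ (Fin p))
    (hv_int : ∀ n, Integrable (v n) P) (hv_mean : ∀ n, ∫ ω, v n ω ∂P = 0)
    -- initial estimator `θ̃_n = θ₀ + b(θ₀, n) + v(θ₀, n)`
    (θtilde : ℕ → Ω → EuclideanSpace ℝ (Fin p))
    (hθtilde : ∀ n ω, θtilde n ω = θ₀ + b n θ₀ + v n ω)
    -- simulation errors and the OBREE `θ̂_n`, solving `θ̃_n = π*(θ̂_n, n)` a.s.
    (vstar : ℕ → Fin H → EuclideanSpace ℝ (Fin p) → Ω → EuclideanSpace ℝ (Fin p))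
    (θhat : ℕ → Ω → EuclideanSpace ℝ (Fin p))
    (hθhatΘ : ∀ n ω, θhat n ω ∈ Θ)
    (hfix : ∀ n, ∀ᵐ ω ∂P, θtilde n ω
      = θhat n ω + b n (θhat n ω) + (H : ℝ)⁻¹ • ∑ h : Fin H, vstar n h (θhat n ω) ω)
    (hθhat_int : ∀ n, Integrable (θhat n) P)
    (hbθhat_int : ∀ n, Integrable (fun ω => b n (θhat n ω)) P)
    (hvstar_int : ∀ n, ∀ h : Fin H, Integrable (fun ω => vstar n h (θhat n ω) ω) P)
    (hvstar_mean : ∀ n, ∀ h : Fin H, ∫ ω, vstar n h (θhat n ω) ω ∂P = 0)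
    -- uniform `∞`-norm bound on the bias function
    (β M : ℝ) (N : ℕ)
    (hb_bound : ∀ n : ℕ, n ≥ N → ∀ θ ∈ Θ, ∀ i : Fin p, |b n θ i| ≤ M * (n : ℝ) ^ (-β)) :
    ∀ n : ℕ, n ≥ N → ∀ i : Fin p,
      |(∫ ω, θhat n ω ∂P) i - θ₀ i| ≤ 2 * M * (n : ℝ) ^ (-β) := by
  intro n hn i
  have hmean : ∫ ω, θhat n ω ∂P + ∫ ω, b n (θhat n ω) ∂P = θ₀ + b n θ₀ :=
    integral_add_integral_eq_of_ae_eq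
      (w := fun ω => (H : ℝ)⁻¹ • ∑ h : Fin H, vstar n h (θhat n ω) ω)
      (by filter_upwards [hfix n] with ω hω; rw [← hθtilde, hω])
      (hv_int n) (hv_mean n) (hθhat_int n) (hbθhat_int n)
      ((integrable_finsetSum Finset.univ fun h _ => hvstar_int n h).smul (H : ℝ)⁻¹)
      (integral_smul_sum_eq_zero _ (hvstar_int n) (hvstar_mean n))
  have hcoord : (∫ ω, θhat n ω ∂P) i - θ₀ i = b n θ₀ i - (∫ ω, b n (θhat n ω) ∂P) i := by
    have := congrArg (· i) hmean
    simp only [PiLp.add_apply] at this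
    linarith
  have hb₀ : |b n θ₀ i| ≤ M * (n : ℝ) ^ (-β) := hb_bound n hn θ₀ (interior_subset hθ₀) i
  have hbhat : |(∫ ω, b n (θhat n ω) ∂P) i| ≤ M * (n : ℝ) ^ (-β) :=
    abs_integral_apply_le (hbθhat_int n) i fun ω => hb_bound n hn _ (hθhatΘ n ω) i
  calc |(∫ ω, θhat n ω ∂P) i - θ₀ i|
      = |b n θ₀ i - (∫ ω, b n (θhat n ω) ∂P) i| := by rw [hcoord]
    _ ≤ |b n θ₀ i| + |(∫ ω, b n (θhat n ω) ∂P) i| := abs_sub _ _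
    _ ≤ 2 * M * (n : ℝ) ^ (-β) := by linarith

/-- The first-order bias bound (proof:bias:inter:3) in the proof of Theorem 1:
if `sup_{θ∈Θ} ‖b(θ,n)‖_∞ ≤ M n^{-β}` for all `n ≥ N`, then
`‖E[θ̂_n] − θ₀‖_∞ ≤ 2 M n^{-β}` for all `n ≥ N` (the `∞`-norm bounds are stated
coordinatewise). -/
theorem stmt_4 {p H : ℕ} (hp : 1 ≤ p) (hH : 1 ≤ H)
    {Ω : Type*} [MeasurableSpace Ω] (P : Measure Ω) [IsProbabilityMeasure P]
    (Θ : Set (EuclideanSpace ℝ (Fin p))) (hΘ : IsCompact Θ)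
    (θ₀ : EuclideanSpace ℝ (Fin p)) (hθ₀ : θ₀ ∈ interior Θ)
    -- bias function `b(·, n)`, continuous on `Θ` for each `n`
    (b : ℕ → EuclideanSpace ℝ (Fin p) → EuclideanSpace ℝ (Fin p))
    (hb_cont : ∀ n : ℕ, ContinuousOn (b n) Θ)
    -- zero-mean error of the initial estimator
    (v : ℕ → Ω → EuclideanSpace ℝ (Fin p))
    (hv_int : ∀ n, Integrable (v n) P) (hv_mean : ∀ n, ∫ ω, v n ω ∂P = 0)
    -- initial estimator `θ̃_n = θ₀ + b(θ₀, n) + v(θ₀, n)`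
    (θtilde : ℕ → Ω → EuclideanSpace ℝ (Fin p))
    (hθtilde : ∀ n ω, θtilde n ω = θ₀ + b n θ₀ + v n ω)
    -- simulation errors and the OBREE `θ̂_n`, solving `θ̃_n = π*(θ̂_n, n)` a.s.
    (vstar : ℕ → Fin H → EuclideanSpace ℝ (Fin p) → Ω → EuclideanSpace ℝ (Fin p))
    (θhat : ℕ → Ω → EuclideanSpace ℝ (Fin p))
    (hθhatΘ : ∀ n ω, θhat n ω ∈ Θ)
    (hfix : ∀ n, ∀ᵐ ω ∂P, θtilde n ω
      = θhat n ω + b n (θhat n ω) + (H : ℝ)⁻¹ • ∑ h : Fin H, vstar n h (θhat n ω) ω)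
    (hθhat_int : ∀ n, Integrable (θhat n) P)
    (hbθhat_int : ∀ n, Integrable (fun ω => b n (θhat n ω)) P)
    (hvstar_int : ∀ n, ∀ h : Fin H, Integrable (fun ω => vstar n h (θhat n ω) ω) P)
    (hvstar_mean : ∀ n, ∀ h : Fin H, ∫ ω, vstar n h (θhat n ω) ω ∂P = 0)
    -- uniform `∞`-norm bound on the bias function
    (β M : ℝ) (hβ : 0 < β) (hM : 0 < M) (N : ℕ)
    (hb_bound : ∀ n : ℕ, n ≥ N → ∀ θ ∈ Θ, ∀ i : Fin p, |b n θ i| ≤ M * (n : ℝ) ^ (-β)) :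
    ∀ n : ℕ, n ≥ N → ∀ i : Fin p,
      |(∫ ω, θhat n ω ∂P) i - θ₀ i| ≤ 2 * M * (n : ℝ) ^ (-β) :=
  stmt_4_general P Θ θ₀ hθ₀ b v hv_int hv_mean θtilde hθtilde vstar θhat hθhatΘ hfix hθhat_int
    hbθhat_int hvstar_int hvstar_mean β M N hb_bound
end

section
/- Under the simulation framework with affine asymptotic bias a(θ) = Aθ + c, with b(·,n) continuous on Θ, the following identity holds for each n: (I + A) E[θ̂_n − θ₀] = −E[ b(θ̂_n, n) − b(θ₀, n) ]; in particular, if I + A is invertible, then E[θ̂_n − θ₀] = −(I + A)^{−1} E[ b(θ̂_n, n) − b(θ₀, n) ]. -/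
/-!
Taking expectations in the estimating equation `θ̃ = π*(θ̂)` kills the zero-mean noise `v` and
the simulation errors `v*_h(θ̂)`. Because `a` is affine, `E[a(θ̂)] - a(θ₀) = A E[θ̂ - θ₀]`, so what
remains is `E[θ̂ - θ₀] + A E[θ̂ - θ₀] + E[b(θ̂) - b(θ₀)] = 0`.
-/

open MeasureTheory

namespace Matrix

variable {n R : Type*} [Fintype n] [DecidableEq n] [CommRing R] (p : ENNReal)

theorem toLpLin_one_add_apply (A : Matrix n n R) (x : WithLp p (n → R)) :
    toLpLin p p (1 + A) x = x + toLpLin p p A x := by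
  simp only [map_add, toLpLin_one, LinearMap.add_apply, LinearMap.id_apply]

theorem toLpLin_inv_apply_toLpLin_apply {M : Matrix n n R} (hM : IsUnit M)
    (x : WithLp p (n → R)) : toLpLin p p M⁻¹ (toLpLin p p M x) = x := by
  rw [← LinearMap.comp_apply, ← toLpLin_mul_same,
    nonsing_inv_mul M ((isUnit_iff_isUnit_det M).mp hM), toLpLin_one, LinearMap.id_apply]

end Matrix

section

variable {Ω E ι : Type*} [MeasurableSpace Ω] {P : Measure Ω}
  [NormedAddCommGroup E] [NormedSpace ℝ E]

theorem integral_smul_sum_eq_zero_s7 (r : ℝ) (s : Finset ι) {f : ι → Ω → E}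
    (hf : ∀ i ∈ s, Integrable (f i) P) (hf0 : ∀ i ∈ s, ∫ ω, f i ω ∂P = 0) :
    ∫ ω, r • ∑ i ∈ s, f i ω ∂P = 0 := by
  rw [integral_smul, integral_finsetSum s hf, Finset.sum_eq_zero hf0, smul_zero]

theorem integral_add_map_integral_eq_neg_of_ae_eq_sub [CompleteSpace E] (L : E →L[ℝ] E)
    {D G V W : Ω → E}
    (hD : Integrable D P) (hG : Integrable G P) (hV : Integrable V P) (hW : Integrable W P)
    (hV0 : ∫ ω, V ω ∂P = 0) (hW0 : ∫ ω, W ω ∂P = 0)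
    (h : ∀ᵐ ω ∂P, D ω + L (D ω) + G ω = V ω - W ω) :
    ∫ ω, D ω ∂P + L (∫ ω, D ω ∂P) = -∫ ω, G ω ∂P := by
  have hLD : Integrable (fun ω => L (D ω)) P := L.integrable_comp hD
  have hint := integral_congr_ae h
  rw [integral_add (f := fun ω => D ω + L (D ω)) (hD.add hLD) hG, integral_add hD hLD,
    L.integral_comp_comm hD, integral_sub hV hW, hV0, hW0, sub_zero] at hint
  exact eq_neg_of_add_eq_zero_left hint

end

theorem stmt_7_general {p H : ℕ}
    {Ω : Type*} [MeasurableSpace Ω] (P : Measure Ω) [IsProbabilityMeasure P]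
    (θ₀ : EuclideanSpace ℝ (Fin p))
    -- affine asymptotic bias `a(θ) = Aθ + c`
    (A : Matrix (Fin p) (Fin p) ℝ) (c : EuclideanSpace ℝ (Fin p))
    (a : EuclideanSpace ℝ (Fin p) → EuclideanSpace ℝ (Fin p))
    (ha : ∀ θ, a θ = Matrix.toEuclideanLin A θ + c)
    -- bias function `b(·, n)` at the fixed sample size, continuous on `Θ`
    (b : EuclideanSpace ℝ (Fin p) → EuclideanSpace ℝ (Fin p))
    -- zero-mean error of the initial estimator
    (v : Ω → EuclideanSpace ℝ (Fin p))
    (hv_int : Integrable v P) (hv_mean : ∫ ω, v ω ∂P = 0)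
    -- initial estimator `θ̃ = θ₀ + a(θ₀) + b(θ₀) + v`
    (θtilde : Ω → EuclideanSpace ℝ (Fin p))
    (hθtilde : ∀ ω, θtilde ω = θ₀ + a θ₀ + b θ₀ + v ω)
    -- simulation errors and the OBREE `θ̂`, solving `θ̃ = π*(θ̂)` a.s., where
    -- `π*(θ) = θ + a(θ) + b(θ) + H⁻¹ Σ_h v*_h(θ)`
    (vstar : Fin H → EuclideanSpace ℝ (Fin p) → Ω → EuclideanSpace ℝ (Fin p))
    (θhat : Ω → EuclideanSpace ℝ (Fin p))
    (hfix : ∀ᵐ ω ∂P, θtilde ω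
      = θhat ω + a (θhat ω) + b (θhat ω) + (H : ℝ)⁻¹ • ∑ h : Fin H, vstar h (θhat ω) ω)
    (hθhat_int : Integrable θhat P)
    (hbθhat_int : Integrable (fun ω => b (θhat ω)) P)
    (hvstar_int : ∀ h : Fin H, Integrable (fun ω => vstar h (θhat ω) ω) P)
    (hvstar_mean : ∀ h : Fin H, ∫ ω, vstar h (θhat ω) ω ∂P = 0) :
    Matrix.toEuclideanLin (1 + A) (∫ ω, (θhat ω - θ₀) ∂P)
        = - ∫ ω, (b (θhat ω) - b θ₀) ∂P ∧
      (IsUnit (1 + A) → ∫ ω, (θhat ω - θ₀) ∂P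
        = - Matrix.toEuclideanLin (1 + A)⁻¹ (∫ ω, (b (θhat ω) - b θ₀) ∂P)) := by
  let L := (Matrix.toEuclideanLin A).toContinuousLinearMap
  have hcentered : ∀ᵐ ω ∂P, (θhat ω - θ₀) + L (θhat ω - θ₀) + (b (θhat ω) - b θ₀)
      = v ω - (H : ℝ)⁻¹ • ∑ h : Fin H, vstar h (θhat ω) ω := by
    filter_upwards [hfix] with ω hω
    rw [hθtilde, ha, ha] at hω
    rw [LinearMap.coe_toContinuousLinearMap', map_sub]
    linear_combination (norm := module) -hω
  have hmean := integral_add_map_integral_eq_neg_of_ae_eq_sub L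
    (hθhat_int.sub (integrable_const θ₀)) (hbθhat_int.sub (integrable_const (b θ₀))) hv_int
    ((integrable_finsetSum _ fun h _ => hvstar_int h).smul (H : ℝ)⁻¹) hv_mean
    (integral_smul_sum_eq_zero_s7 _ _ (fun h _ => hvstar_int h) fun h _ => hvstar_mean h) hcentered
  have hidentity : Matrix.toEuclideanLin (1 + A) (∫ ω, (θhat ω - θ₀) ∂P)
      = - ∫ ω, (b (θhat ω) - b θ₀) ∂P := by
    rw [Matrix.toLpLin_one_add_apply]
    exact hmean
  refine ⟨hidentity, fun hA => ?_⟩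
  rw [← map_neg, ← hidentity, Matrix.toLpLin_inv_apply_toLpLin_apply _ hA]

/-- The key displayed identity in the proof of Corollary 1: under the simulation
framework with affine asymptotic bias `a(θ) = Aθ + c`,
`(I + A) E[θ̂ − θ₀] = −E[b(θ̂) − b(θ₀)]`; in particular, if `I + A` is invertible,
`E[θ̂ − θ₀] = −(I + A)⁻¹ E[b(θ̂) − b(θ₀)]`. -/
theorem stmt_7 {p H : ℕ} (hp : 1 ≤ p) (hH : 1 ≤ H)
    {Ω : Type*} [MeasurableSpace Ω] (P : Measure Ω) [IsProbabilityMeasure P]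
    (Θ : Set (EuclideanSpace ℝ (Fin p))) (hΘ : IsCompact Θ)
    (θ₀ : EuclideanSpace ℝ (Fin p)) (hθ₀ : θ₀ ∈ interior Θ)
    -- affine asymptotic bias `a(θ) = Aθ + c`
    (A : Matrix (Fin p) (Fin p) ℝ) (c : EuclideanSpace ℝ (Fin p))
    (a : EuclideanSpace ℝ (Fin p) → EuclideanSpace ℝ (Fin p))
    (ha : ∀ θ, a θ = Matrix.toEuclideanLin A θ + c)
    -- bias function `b(·, n)` at the fixed sample size, continuous on `Θ`
    (b : EuclideanSpace ℝ (Fin p) → EuclideanSpace ℝ (Fin p))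
    (hb_cont : ContinuousOn b Θ)
    -- zero-mean error of the initial estimator
    (v : Ω → EuclideanSpace ℝ (Fin p))
    (hv_int : Integrable v P) (hv_mean : ∫ ω, v ω ∂P = 0)
    -- initial estimator `θ̃ = θ₀ + a(θ₀) + b(θ₀) + v`
    (θtilde : Ω → EuclideanSpace ℝ (Fin p))
    (hθtilde : ∀ ω, θtilde ω = θ₀ + a θ₀ + b θ₀ + v ω)
    -- simulation errors and the OBREE `θ̂`, solving `θ̃ = π*(θ̂)` a.s., where
    -- `π*(θ) = θ + a(θ) + b(θ) + H⁻¹ Σ_h v*_h(θ)`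
    (vstar : Fin H → EuclideanSpace ℝ (Fin p) → Ω → EuclideanSpace ℝ (Fin p))
    (θhat : Ω → EuclideanSpace ℝ (Fin p))
    (hθhatΘ : ∀ ω, θhat ω ∈ Θ)
    (hfix : ∀ᵐ ω ∂P, θtilde ω
      = θhat ω + a (θhat ω) + b (θhat ω) + (H : ℝ)⁻¹ • ∑ h : Fin H, vstar h (θhat ω) ω)
    (hθhat_int : Integrable θhat P)
    (hbθhat_int : Integrable (fun ω => b (θhat ω)) P)
    (hvstar_int : ∀ h : Fin H, Integrable (fun ω => vstar h (θhat ω) ω) P)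
    (hvstar_mean : ∀ h : Fin H, ∫ ω, vstar h (θhat ω) ω ∂P = 0) :
    Matrix.toEuclideanLin (1 + A) (∫ ω, (θhat ω - θ₀) ∂P)
        = - ∫ ω, (b (θhat ω) - b θ₀) ∂P ∧
      (IsUnit (1 + A) → ∫ ω, (θhat ω - θ₀) ∂P
        = - Matrix.toEuclideanLin (1 + A)⁻¹ (∫ ω, (b (θhat ω) - b θ₀) ∂P)) :=
  stmt_7_general P θ₀ A c a ha b v hv_int hv_mean θtilde hθtilde vstar θhat hfix hθhat_int
    hbθhat_int hvstar_int hvstar_mean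
end
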